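/- arXiv:2103.04211 — 2 statements merged into one kernel-verified Lean document; each statement's English description precedes it below -/
import Mathlib

section
/- For a fractional Brownian motion B^H with Hurst index H ∈ (0,1), the first iterated integral satisfies E[(J B^H)_t (J B^H)_r] = (1/2)[ (t r^{2H+1} + r t^{2H+1})/(2H+1) + (|t−r|^{2H+2} − r^{2H+2} − t^{2H+2})/((2H+1)(2H+2)) ] for all t, r ≥ 0. -/
open MeasureTheory ProbabilityTheory Real

/-- Integral operator `(J X)(t) = ∫_0^t X(r) dr`. -/
noncomputable def J (X : ℝ → ℝ) : ℝ → ℝ := fun t => ∫ r in (0:ℝ)..t, X r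

/-- A process is centered Gaussian if every finite linear combination of its values is a
centered real Gaussian random variable. -/
def CenteredGaussianProcess {Ω : Type*} [MeasurableSpace Ω] (P : Measure Ω)
    (X : Ω → ℝ → ℝ) : Prop :=
  ∀ (n : ℕ) (t c : Fin n → ℝ), ∃ v : NNReal,
    Measure.map (fun ω => ∑ i, c i * X ω (t i)) P = gaussianReal 0 v

lemma hasDerivAt_mul_abs_rpow {β : ℝ} (hβ : 0 < β) (x : ℝ) :
    HasDerivAt (fun x : ℝ => x * |x| ^ β) ((β + 1) * |x| ^ β) x := by
  rcases lt_trichotomy x 0 with hx | hx | hx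
  · have h1 : HasDerivAt (fun x : ℝ => -((-x) ^ (β + 1))) ((β + 1) * (-x) ^ β) x := by
      have h0 := (Real.hasDerivAt_rpow_const (x := -x) (p := β + 1) (Or.inl (by linarith))).comp x
        ((hasDerivAt_neg x))
      have h := h0.neg
      refine h.congr_deriv ?_
      rw [add_sub_cancel_right]
      ring
    have heq : (fun x : ℝ => x * |x| ^ β) =ᶠ[nhds x] fun x => -((-x) ^ (β + 1)) := by
      filter_upwards [eventually_lt_nhds hx] with y hy
      rw [abs_of_neg hy, Real.rpow_add_one (by linarith) β]
      ring
    have h2 := h1.congr_of_eventuallyEq heq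
    rwa [abs_of_neg hx]
  · subst hx
    rw [hasDerivAt_iff_tendsto_slope]
    have hs : ∀ y : ℝ, y ≠ 0 → slope (fun x : ℝ => x * |x| ^ β) 0 y = |y| ^ β := by
      intro y hy
      simp only [slope, vsub_eq_sub, sub_zero, zero_mul, abs_zero]
      rw [smul_eq_mul, ← mul_assoc, inv_mul_cancel₀ hy, one_mul]
    have habs : (β + 1) * |(0:ℝ)| ^ β = 0 := by
      simp [Real.zero_rpow hβ.ne']
    rw [habs]
    have hc : Filter.Tendsto (fun y : ℝ => |y| ^ β) (nhdsWithin 0 {(0:ℝ)}ᶜ) (nhds 0) := by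
      have : Filter.Tendsto (fun y : ℝ => |y| ^ β) (nhds 0) (nhds (|(0:ℝ)| ^ β)) :=
        ((continuous_abs.rpow_const fun _ => Or.inr hβ.le).tendsto 0)
      simpa [Real.zero_rpow hβ.ne'] using this.mono_left nhdsWithin_le_nhds
    exact hc.congr' (by filter_upwards [self_mem_nhdsWithin] with y hy; exact (hs y hy).symm)
  · have h1 : HasDerivAt (fun x : ℝ => x ^ (β + 1)) ((β + 1) * x ^ β) x := by
      have := Real.hasDerivAt_rpow_const (x := x) (p := β + 1) (Or.inl hx.ne')
      simpa using this
    have heq : (fun x : ℝ => x * |x| ^ β) =ᶠ[nhds x] fun x => x ^ (β + 1) := by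
      filter_upwards [eventually_gt_nhds hx] with y hy
      rw [abs_of_pos hy, Real.rpow_add_one hy.ne' β]
      ring
    have h2 := h1.congr_of_eventuallyEq heq
    rwa [abs_of_pos hx]

lemma cont_abs_rpow {α : ℝ} (hα : 0 < α) : Continuous fun x : ℝ => |x| ^ α :=
  continuous_abs.rpow_const fun _ => Or.inr hα.le

lemma integral_abs_rpow {α : ℝ} (hα : 0 < α) (a b : ℝ) :
    ∫ x in a..b, |x| ^ α = (b * |b| ^ α - a * |a| ^ α) / (α + 1) := by
  have h : ∀ x ∈ Set.uIcc a b, HasDerivAt (fun x : ℝ => x * |x| ^ α / (α + 1)) (|x| ^ α) x := by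
    intro x _
    have := (hasDerivAt_mul_abs_rpow hα x).div_const (α + 1)
    refine this.congr_deriv ?_
    field_simp
  rw [intervalIntegral.integral_eq_sub_of_hasDerivAt h ((cont_abs_rpow hα).intervalIntegrable a b)]
  ring

lemma integral_self_mul_abs_rpow {α : ℝ} (hα : 0 < α) (a b : ℝ) :
    ∫ x in a..b, x * |x| ^ α = (|b| ^ (α + 2) - |a| ^ (α + 2)) / (α + 2) := by
  have h : ∀ x ∈ Set.uIcc a b, HasDerivAt (fun x : ℝ => |x| ^ (α + 2) / (α + 2)) (x * |x| ^ α) x := by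
    intro x _
    have := (hasDerivAt_abs_rpow x (p := α + 2) (by linarith)).div_const (α + 2)
    refine this.congr_deriv ?_
    rw [show α + 2 - 2 = α by ring]
    field_simp
  rw [intervalIntegral.integral_eq_sub_of_hasDerivAt h
    ((continuous_id.mul (cont_abs_rpow hα)).intervalIntegrable a b)]
  ring

lemma mul_rpow_self {t α : ℝ} (hα : 0 < α) (ht : 0 ≤ t) : t * t ^ α = t ^ (α + 1) := by
  rcases eq_or_lt_of_le ht with h | h
  · subst h
    rw [Real.zero_rpow (by positivity : α + 1 ≠ 0)]
    ring
  · rw [Real.rpow_add_one h.ne']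
    ring

lemma det_integral {α : ℝ} (hα : 0 < α) {t r : ℝ} (ht : 0 ≤ t) (hr : 0 ≤ r) :
    (∫ u in (0:ℝ)..t, ∫ v in (0:ℝ)..r, (|u| ^ α + |v| ^ α - |u - v| ^ α) / 2)
      = (1/2) * ((t * r ^ (α + 1) + r * t ^ (α + 1)) / (α + 1)
        + (|t - r| ^ (α + 2) - r ^ (α + 2) - t ^ (α + 2)) / ((α + 1) * (α + 2))) := by
  have hinner : ∀ u : ℝ, (∫ v in (0:ℝ)..r, (|u| ^ α + |v| ^ α - |u - v| ^ α) / 2)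
      = (r * |u| ^ α + r * |r| ^ α / (α + 1)
        - (u * |u| ^ α - (u - r) * |u - r| ^ α) / (α + 1)) / 2 := by
    intro u
    have i1 : IntervalIntegrable (fun _ : ℝ => |u| ^ α) volume 0 r := intervalIntegrable_const
    have i2 := (cont_abs_rpow hα).intervalIntegrable (μ := volume) 0 r
    have i3 : IntervalIntegrable (fun v : ℝ => |u - v| ^ α) volume 0 r :=
      ((cont_abs_rpow hα).comp (continuous_const.sub continuous_id)).intervalIntegrable 0 r
    rw [intervalIntegral.integral_div, intervalIntegral.integral_sub (i1.add i2) i3,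
      intervalIntegral.integral_add i1 i2, intervalIntegral.integral_const,
      integral_abs_rpow hα]
    have hcomp : (∫ v in (0:ℝ)..r, |u - v| ^ α) = ∫ x in (u - r)..(u - 0), |x| ^ α :=
      intervalIntegral.integral_comp_sub_left (fun x => |x| ^ α) u
    rw [hcomp, integral_abs_rpow hα]
    simp only [sub_zero, smul_eq_mul, zero_mul, abs_zero]
    try ring
  simp only [hinner]
  have j1 : IntervalIntegrable (fun u : ℝ => r * |u| ^ α) volume 0 t :=
    (continuous_const.mul (cont_abs_rpow hα)).intervalIntegrable 0 t
  have j2 : IntervalIntegrable (fun _ : ℝ => r * |r| ^ α / (α + 1)) volume 0 t :=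
    intervalIntegrable_const
  have j3 : IntervalIntegrable (fun u : ℝ => u * |u| ^ α) volume 0 t :=
    (continuous_id.mul (cont_abs_rpow hα)).intervalIntegrable 0 t
  have j4 : IntervalIntegrable (fun u : ℝ => (u - r) * |u - r| ^ α) volume 0 t := by
    have : Continuous fun u : ℝ => (u - r) * |u - r| ^ α :=
      (continuous_id.sub continuous_const).mul
        ((cont_abs_rpow hα).comp (continuous_id.sub continuous_const))
    exact this.intervalIntegrable 0 t
  rw [intervalIntegral.integral_div, intervalIntegral.integral_sub (j1.add j2)
      (((j3.sub j4)).div_const (α + 1)),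
    intervalIntegral.integral_add j1 j2, intervalIntegral.integral_const,
    intervalIntegral.integral_const_mul, integral_abs_rpow hα,
    intervalIntegral.integral_div, intervalIntegral.integral_sub j3 j4,
    integral_self_mul_abs_rpow hα]
  have hcomp : (∫ u in (0:ℝ)..t, (u - r) * |u - r| ^ α)
      = ∫ x in (0 - r)..(t - r), x * |x| ^ α :=
    intervalIntegral.integral_comp_sub_right (fun x => x * |x| ^ α) r
  rw [hcomp, integral_self_mul_abs_rpow hα]
  have habs_t : |t| = t := abs_of_nonneg ht
  have habs_r : |r| = r := abs_of_nonneg hr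
  have h0r : |0 - r| = r := by rw [zero_sub, abs_neg, habs_r]
  simp only [sub_zero, zero_sub, abs_neg, smul_eq_mul, zero_mul, abs_zero, habs_t, habs_r,
    Real.zero_rpow (show α + 2 ≠ 0 by positivity)]
  have e1 : t * t ^ α = t ^ (α + 1) := mul_rpow_self hα ht
  have e2 : r * r ^ α = r ^ (α + 1) := mul_rpow_self hα hr
  have h1 : (α : ℝ) + 1 ≠ 0 := by positivity
  have h2 : (α : ℝ) + 2 ≠ 0 := by positivity
  rw [← e1, ← e2]
  field_simp
  ring

lemma fubini_step {Ω : Type*} [MeasurableSpace Ω] (P : Measure Ω) [IsProbabilityMeasure P]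
    (H : ℝ) (hH : H ∈ Set.Ioo (0:ℝ) 1) (B : Ω → ℝ → ℝ)
    (hmeas : Measurable (Function.uncurry B))
    (hcov : ∀ t r : ℝ, ∫ ω, B ω t * B ω r ∂P
      = (|t| ^ (2 * H) + |r| ^ (2 * H) - |t - r| ^ (2 * H)) / 2)
    (t r : ℝ) (ht : 0 ≤ t) (hr : 0 ≤ r) :
    ∫ ω, (∫ x in (0:ℝ)..t, B ω x) * (∫ x in (0:ℝ)..r, B ω x) ∂P
      = ∫ u in (0:ℝ)..t, ∫ v in (0:ℝ)..r, (|u| ^ (2*H) + |v| ^ (2*H) - |u - v| ^ (2*H)) / 2 := by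
  have hα : 0 < 2 * H := by linarith [hH.1]
  set ν : Measure (ℝ × ℝ) :=
    (volume.restrict (Set.Ioc 0 t)).prod (volume.restrict (Set.Ioc 0 r)) with hν
  -- measurability of single-time marginals
  have hmB : ∀ u : ℝ, Measurable fun ω => B ω u := fun u =>
    hmeas.comp (measurable_id.prodMk measurable_const)
  -- second moment identity
  have hsec : ∀ u : ℝ, u ≠ 0 → Integrable (fun ω => B ω u * B ω u) P := by
    intro u hu
    by_contra h
    have h0 := integral_undef h
    rw [hcov u u] at h0
    have : |u - u| ^ (2 * H) = 0 := by
      rw [sub_self, abs_zero, Real.zero_rpow hα.ne']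
    rw [this] at h0
    have hpos : 0 < |u| ^ (2 * H) := Real.rpow_pos_of_pos (abs_pos.mpr hu) _
    have : |u| ^ (2 * H) = 0 := by linarith [h0]
    linarith
  have hlsec : ∀ u : ℝ, u ≠ 0 →
      (∫⁻ ω, ENNReal.ofReal (B ω u * B ω u) ∂P) = ENNReal.ofReal (|u| ^ (2 * H)) := by
    intro u hu
    rw [← ofReal_integral_eq_lintegral_ofReal (hsec u hu)
      (Filter.Eventually.of_forall fun ω => mul_self_nonneg _)]
    congr 1
    rw [hcov u u, sub_self, abs_zero, Real.zero_rpow hα.ne']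
    ring
  -- the uncurried product is integrable on P.prod ν
  have hmf : Measurable fun p : Ω × (ℝ × ℝ) => B p.1 p.2.1 * B p.1 p.2.2 := by
    exact (hmeas.comp (measurable_fst.prodMk (measurable_snd.fst))).mul
      (hmeas.comp (measurable_fst.prodMk measurable_snd.snd))
  have hint : Integrable (Function.uncurry fun ω (z : ℝ × ℝ) => B ω z.1 * B ω z.2) (P.prod ν) := by
    have finst1 : IsFiniteMeasure (volume.restrict (Set.Ioc (0:ℝ) t)) :=
      ⟨by rw [Measure.restrict_apply_univ]; exact measure_Ioc_lt_top⟩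
    have finst2 : IsFiniteMeasure (volume.restrict (Set.Ioc (0:ℝ) r)) :=
      ⟨by rw [Measure.restrict_apply_univ]; exact measure_Ioc_lt_top⟩
    have finst : IsFiniteMeasure ν := by rw [hν]; infer_instance
    refine ⟨hmf.aestronglyMeasurable, ?_⟩
    rw [hasFiniteIntegral_iff_norm]
    have hm1 : Measurable fun p : Ω × (ℝ × ℝ) => ENNReal.ofReal (B p.1 p.2.1 * B p.1 p.2.1) :=
      ((hmeas.comp (measurable_fst.prodMk measurable_snd.fst)).mul
        (hmeas.comp (measurable_fst.prodMk measurable_snd.fst))).ennreal_ofReal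
    have hm2 : Measurable fun p : Ω × (ℝ × ℝ) => ENNReal.ofReal (B p.1 p.2.2 * B p.1 p.2.2) :=
      ((hmeas.comp (measurable_fst.prodMk measurable_snd.snd)).mul
        (hmeas.comp (measurable_fst.prodMk measurable_snd.snd))).ennreal_ofReal
    have hbound : ∀ p : Ω × (ℝ × ℝ),
        ENNReal.ofReal ‖(Function.uncurry fun ω (z : ℝ × ℝ) => B ω z.1 * B ω z.2) p‖
          ≤ ENNReal.ofReal (B p.1 p.2.1 * B p.1 p.2.1)
            + ENNReal.ofReal (B p.1 p.2.2 * B p.1 p.2.2) := by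
      rintro ⟨ω, u, v⟩
      rw [← ENNReal.ofReal_add (mul_self_nonneg _) (mul_self_nonneg _)]
      apply ENNReal.ofReal_le_ofReal
      simp only [Function.uncurry, Real.norm_eq_abs]
      rw [abs_mul]
      nlinarith [two_mul_le_add_sq (|B ω u|) (|B ω v|), abs_nonneg (B ω u), abs_nonneg (B ω v),
        sq_abs (B ω u), sq_abs (B ω v)]
    calc ∫⁻ p, ENNReal.ofReal ‖(Function.uncurry fun ω (z : ℝ × ℝ) => B ω z.1 * B ω z.2) p‖
            ∂(P.prod ν)
        ≤ ∫⁻ p, (ENNReal.ofReal (B p.1 p.2.1 * B p.1 p.2.1)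
            + ENNReal.ofReal (B p.1 p.2.2 * B p.1 p.2.2)) ∂(P.prod ν) := lintegral_mono hbound
      _ = (∫⁻ p, ENNReal.ofReal (B p.1 p.2.1 * B p.1 p.2.1) ∂(P.prod ν))
            + ∫⁻ p, ENNReal.ofReal (B p.1 p.2.2 * B p.1 p.2.2) ∂(P.prod ν) :=
          lintegral_add_left hm1 _
      _ < ⊤ := by
          have key : ∀ (g : ℝ × ℝ → ℝ) (c : ℝ), Measurable g →
              (∀ᵐ z ∂ν, (∫⁻ ω, ENNReal.ofReal (B ω (g z) * B ω (g z)) ∂P)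
                ≤ ENNReal.ofReal c) →
              (∫⁻ p, ENNReal.ofReal (B p.1 (g p.2) * B p.1 (g p.2)) ∂(P.prod ν)) < ⊤ := by
            intro g c hg hae
            have hmg : Measurable fun p : Ω × (ℝ × ℝ) =>
                ENNReal.ofReal (B p.1 (g p.2) * B p.1 (g p.2)) := by
              have : Measurable fun p : Ω × (ℝ × ℝ) => B p.1 (g p.2) :=
                hmeas.comp (measurable_fst.prodMk (hg.comp measurable_snd))
              exact (this.mul this).ennreal_ofReal
            rw [lintegral_prod_symm _ hmg.aemeasurable]
            calc (∫⁻ z, ∫⁻ ω, ENNReal.ofReal (B ω (g z) * B ω (g z)) ∂P ∂ν)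
                ≤ ∫⁻ _, ENNReal.ofReal c ∂ν := lintegral_mono_ae hae
              _ = ENNReal.ofReal c * ν Set.univ := lintegral_const _
              _ < ⊤ := ENNReal.mul_lt_top ENNReal.ofReal_lt_top (measure_lt_top ν _)
          have haemem : ∀ᵐ z ∂ν, z ∈ Set.Ioc (0:ℝ) t ×ˢ Set.Ioc (0:ℝ) r := by
            rw [hν, Measure.prod_restrict]
            exact ae_restrict_mem (measurableSet_Ioc.prod measurableSet_Ioc)
          have hb1 : ∀ᵐ z ∂ν, (∫⁻ ω, ENNReal.ofReal (B ω z.1 * B ω z.1) ∂P)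
              ≤ ENNReal.ofReal (t ^ (2 * H)) := by
            filter_upwards [haemem] with z hz
            rw [hlsec z.1 (ne_of_gt hz.1.1)]
            apply ENNReal.ofReal_le_ofReal
            rw [abs_of_pos hz.1.1]
            exact Real.rpow_le_rpow (le_of_lt hz.1.1) hz.1.2 hα.le
          have hb2 : ∀ᵐ z ∂ν, (∫⁻ ω, ENNReal.ofReal (B ω z.2 * B ω z.2) ∂P)
              ≤ ENNReal.ofReal (r ^ (2 * H)) := by
            filter_upwards [haemem] with z hz
            rw [hlsec z.2 (ne_of_gt hz.2.1)]
            apply ENNReal.ofReal_le_ofReal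
            rw [abs_of_pos hz.2.1]
            exact Real.rpow_le_rpow (le_of_lt hz.2.1) hz.2.2 hα.le
          exact ENNReal.add_lt_top.mpr
            ⟨key Prod.fst _ measurable_fst hb1, key Prod.snd _ measurable_snd hb2⟩
  have hJ : ∀ ω, (∫ x in (0:ℝ)..t, B ω x) * (∫ x in (0:ℝ)..r, B ω x)
      = ∫ z, B ω z.1 * B ω z.2 ∂ν := by
    intro ω
    rw [intervalIntegral.integral_of_le ht, intervalIntegral.integral_of_le hr, hν]
    exact (integral_prod_mul _ _).symm
  have hcontcov : Continuous fun z : ℝ × ℝ =>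
      (|z.1| ^ (2 * H) + |z.2| ^ (2 * H) - |z.1 - z.2| ^ (2 * H)) / 2 := by
    have h1 : Continuous fun x : ℝ => |x| ^ (2 * H) :=
      continuous_abs.rpow_const fun _ => Or.inr hα.le
    exact (((h1.comp continuous_fst).add (h1.comp continuous_snd)).sub
      (h1.comp (continuous_fst.sub continuous_snd))).div_const 2
  have hcovint : Integrable (fun z : ℝ × ℝ =>
      (|z.1| ^ (2 * H) + |z.2| ^ (2 * H) - |z.1 - z.2| ^ (2 * H)) / 2) ν := by
    rw [hν, Measure.prod_restrict]
    exact (ContinuousOn.integrableOn_compact (isCompact_Icc.prod isCompact_Icc)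
      hcontcov.continuousOn).mono_set
      (Set.prod_mono Set.Ioc_subset_Icc_self Set.Ioc_subset_Icc_self)
  calc ∫ ω, (∫ x in (0:ℝ)..t, B ω x) * (∫ x in (0:ℝ)..r, B ω x) ∂P
      = ∫ ω, ∫ z, B ω z.1 * B ω z.2 ∂ν ∂P := by simp only [hJ]
    _ = ∫ z, ∫ ω, B ω z.1 * B ω z.2 ∂P ∂ν := integral_integral_swap hint
    _ = ∫ z, (|z.1| ^ (2 * H) + |z.2| ^ (2 * H) - |z.1 - z.2| ^ (2 * H)) / 2 ∂ν := by
        simp only [hcov]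
    _ = ∫ u in Set.Ioc (0:ℝ) t, ∫ v in Set.Ioc (0:ℝ) r,
          (|u| ^ (2 * H) + |v| ^ (2 * H) - |u - v| ^ (2 * H)) / 2 := by
        rw [hν] at hcovint ⊢
        exact integral_prod _ hcovint
    _ = ∫ u in (0:ℝ)..t, ∫ v in (0:ℝ)..r,
          (|u| ^ (2 * H) + |v| ^ (2 * H) - |u - v| ^ (2 * H)) / 2 := by
        rw [intervalIntegral.integral_of_le ht]
        simp only [intervalIntegral.integral_of_le hr]

/-- for a fractional Brownian motion `B^H` with `H ∈ (0,1)`,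
`E[(J B^H)_t (J B^H)_r] = (1/2)[ (t r^{2H+1} + r t^{2H+1})/(2H+1)
  + (|t−r|^{2H+2} − r^{2H+2} − t^{2H+2})/((2H+1)(2H+2)) ]` for all `t, r ≥ 0`. -/
theorem covariance_integrated_fBm
    {Ω : Type*} [MeasurableSpace Ω] (P : Measure Ω) [IsProbabilityMeasure P]
    (H : ℝ) (hH : H ∈ Set.Ioo (0:ℝ) 1) (B : Ω → ℝ → ℝ)
    (hGauss : CenteredGaussianProcess P B)
    (hcont : ∀ ω, Continuous (B ω))
    (hmeas : Measurable (Function.uncurry B))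
    (hcov : ∀ t r : ℝ, ∫ ω, B ω t * B ω r ∂P
      = (|t| ^ (2 * H) + |r| ^ (2 * H) - |t - r| ^ (2 * H)) / 2) :
    ∀ t r : ℝ, 0 ≤ t → 0 ≤ r →
      ∫ ω, J (B ω) t * J (B ω) r ∂P
        = (1 / 2) * ((t * r ^ (2 * H + 1) + r * t ^ (2 * H + 1)) / (2 * H + 1)
          + (|t - r| ^ (2 * H + 2) - r ^ (2 * H + 2) - t ^ (2 * H + 2))
              / ((2 * H + 1) * (2 * H + 2))) := by
  intro t r ht hr
  have hα : 0 < 2 * H := by linarith [hH.1]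
  have h1 : ∫ ω, J (B ω) t * J (B ω) r ∂P
      = ∫ u in (0:ℝ)..t, ∫ v in (0:ℝ)..r,
          (|u| ^ (2 * H) + |v| ^ (2 * H) - |u - v| ^ (2 * H)) / 2 :=
    fubini_step P H hH B hmeas hcov t r ht hr
  rw [h1, det_integral hα ht hr]
end

section
/- For m ∈ ℕ_0, the mild solution X of the fractional stochastic heat equation on ℝ driven by Riesz-kernel noise satisfies sup_{t∈[0,T], x∈ℝ} E|∂_x^m X_t(x)|^2 < ∞ for every T > 0 if and only if 1 + 2m < α + 4γ. Explicitly, E|∂_x^m X_t(x)|^2 = c ∫_0^t s^{(4γ−2m−1)/α} ds · ∫_ℝ e^{−2|ξ|^α} |ξ|^{2m−4γ} dξ (taking θ = σ = 1), which is finite iff (4γ−2m−1)/α > −1. -/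
open MeasureTheory Real ENNReal Set

private lemma fhd_meas1 (s b q : ℝ) :
    Measurable fun ξ : ℝ => ENNReal.ofReal (|ξ| ^ q * Real.exp (-2 * s * |ξ| ^ b)) :=
  ENNReal.measurable_ofReal.comp <|
    (measurable_id.abs.pow_const q).mul
      (((measurable_id.abs.pow_const b).const_mul (-2 * s)).exp)

private lemma fhd_meas2 (a b q : ℝ) :
    Measurable fun ξ : ℝ => ENNReal.ofReal (Real.exp (a * |ξ| ^ b) * |ξ| ^ q) :=
  ENNReal.measurable_ofReal.comp <|
    (((measurable_id.abs.pow_const b).const_mul a).exp).mul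
      (measurable_id.abs.pow_const q)

private lemma fhd_measP (P : ℝ) :
    Measurable fun s : ℝ => ENNReal.ofReal (s ^ P) :=
  ENNReal.measurable_ofReal.comp (measurable_id.pow_const P)

/-- Scaling identity for the spatial spectral integral. -/
private lemma fhd_scale {α q : ℝ} (hα : 0 < α) {s : ℝ} (hs : 0 < s) :
    (∫⁻ ξ : ℝ, ENNReal.ofReal (|ξ| ^ q * Real.exp (-2 * s * |ξ| ^ α)))
      = ENNReal.ofReal (s ^ (-(q + 1) / α)) *
        ∫⁻ ξ : ℝ, ENNReal.ofReal (Real.exp (-2 * |ξ| ^ α) * |ξ| ^ q) := by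
  set c : ℝ := s ^ (-α⁻¹) with hc
  have hc0 : 0 < c := Real.rpow_pos_of_pos hs _
  have hca : c ^ α = s⁻¹ := by
    rw [hc, ← Real.rpow_mul hs.le, neg_mul, inv_mul_cancel₀ hα.ne', Real.rpow_neg_one]
  have hpt : ∀ η : ℝ, |c * η| ^ q * Real.exp (-2 * s * |c * η| ^ α)
      = c ^ q * (Real.exp (-2 * |η| ^ α) * |η| ^ q) := by
    intro η
    have h1 : |c * η| = c * |η| := by rw [abs_mul, abs_of_pos hc0]
    rw [h1, Real.mul_rpow hc0.le (abs_nonneg η), Real.mul_rpow hc0.le (abs_nonneg η), hca]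
    have h2 : -2 * s * (s⁻¹ * |η| ^ α) = -2 * |η| ^ α := by
      field_simp
    rw [h2]; ring
  calc
    (∫⁻ ξ : ℝ, ENNReal.ofReal (|ξ| ^ q * Real.exp (-2 * s * |ξ| ^ α)))
        = ∫⁻ ξ : ℝ, ENNReal.ofReal (|ξ| ^ q * Real.exp (-2 * s * |ξ| ^ α))
            ∂(ENNReal.ofReal |c| • Measure.map (c * ·) volume) := by
          rw [Real.smul_map_volume_mul_left hc0.ne']
    _ = ENNReal.ofReal |c| *
          ∫⁻ ξ : ℝ, ENNReal.ofReal (|ξ| ^ q * Real.exp (-2 * s * |ξ| ^ α))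
            ∂(Measure.map (c * ·) volume) := lintegral_smul_measure _ _
    _ = ENNReal.ofReal |c| *
          ∫⁻ η : ℝ, ENNReal.ofReal (|c * η| ^ q * Real.exp (-2 * s * |c * η| ^ α)) := by
          rw [lintegral_map (fhd_meas1 s α q) (measurable_const_mul c)]
    _ = ENNReal.ofReal |c| * ∫⁻ η : ℝ, ENNReal.ofReal (c ^ q) *
            ENNReal.ofReal (Real.exp (-2 * |η| ^ α) * |η| ^ q) := by
          simp_rw [hpt, ENNReal.ofReal_mul (Real.rpow_nonneg hc0.le q)]
    _ = ENNReal.ofReal |c| * (ENNReal.ofReal (c ^ q) *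
            ∫⁻ η : ℝ, ENNReal.ofReal (Real.exp (-2 * |η| ^ α) * |η| ^ q)) := by
          rw [lintegral_const_mul _ (fhd_meas2 (-2) α q)]
    _ = ENNReal.ofReal (s ^ (-(q + 1) / α)) *
            ∫⁻ η : ℝ, ENNReal.ofReal (Real.exp (-2 * |η| ^ α) * |η| ^ q) := by
          rw [← mul_assoc, abs_of_pos hc0, ← ENNReal.ofReal_mul hc0.le]
          congr 2
          rw [← Real.rpow_one c, hc]
          rw [show ((s : ℝ) ^ (-α⁻¹)) ^ (1:ℝ) = s ^ (-α⁻¹) by rw [Real.rpow_one]]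
          rw [← Real.rpow_mul hs.le, ← Real.rpow_add hs]
          congr 1
          field_simp
          ring

/-- Integrability of the model spectral density. -/
private lemma fhd_integrable {α q : ℝ} (hα : 0 < α) (hq : -1 < q) :
    Integrable fun ξ : ℝ => Real.exp (-2 * |ξ| ^ α) * |ξ| ^ q := by
  have t0 : -1 < (q + 1) / α - 1 := by
    have h1 : 0 < (q + 1) / α := div_pos (by linarith) hα
    linarith
  have hg : IntegrableOn (fun y : ℝ => y ^ ((q + 1) / α - 1) * Real.exp (-2 * y)) (Ioi 0) := by
    have h := integrableOn_rpow_mul_exp_neg_mul_rpow t0 zero_lt_one (by norm_num : (0:ℝ) < 2)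
    exact h.congr_fun (fun x hx => by dsimp only; rw [Real.rpow_one]) measurableSet_Ioi
  have h1 : IntegrableOn (fun x : ℝ => x ^ q * Real.exp (-2 * x ^ α)) (Ioi 0) := by
    have h2 := (integrableOn_Ioi_comp_rpow_iff'
        (fun y : ℝ => y ^ ((q + 1) / α - 1) * Real.exp (-2 * y)) hα.ne').2 hg
    refine h2.congr_fun (fun x hx => ?_) measurableSet_Ioi
    have hx0 : (0:ℝ) < x := hx
    have e1 : (x ^ α) ^ ((q + 1) / α - 1) = x ^ (α * ((q + 1) / α - 1)) :=
      (Real.rpow_mul hx0.le _ _).symm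
    dsimp only
    rw [smul_eq_mul, e1, ← mul_assoc, ← Real.rpow_add hx0]
    congr 2
    field_simp
    ring
  have int_Ioi : IntegrableOn (fun ξ : ℝ => |ξ| ^ q * Real.exp (-2 * |ξ| ^ α)) (Ioi 0) :=
    h1.congr_fun (fun x hx => by rw [abs_of_pos hx]) measurableSet_Ioi
  have int_Iic : IntegrableOn (fun ξ : ℝ => |ξ| ^ q * Real.exp (-2 * |ξ| ^ α)) (Iic 0) := by
    rw [← Measure.map_neg_eq_self (volume : Measure ℝ)]
    have mne : MeasurableEmbedding fun x : ℝ => -x := (Homeomorph.neg ℝ).measurableEmbedding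
    rw [mne.integrableOn_map_iff]
    simp_rw [Function.comp_def, abs_neg, neg_preimage, neg_Iic, neg_zero]
    exact Iff.mpr integrableOn_Ici_iff_integrableOn_Ioi int_Ioi
  have hall : Integrable fun ξ : ℝ => |ξ| ^ q * Real.exp (-2 * |ξ| ^ α) := by
    rw [← integrableOn_univ, ← Set.Iic_union_Ioi (a := (0:ℝ))]
    exact int_Iic.union int_Ioi
  exact hall.congr (Filter.Eventually.of_forall fun ξ => mul_comm _ _)

/-- Finiteness criterion for the time integral. -/
private lemma fhd_afin {P : ℝ} {t : ℝ} (ht : 0 < t) :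
    (∫⁻ s in Set.Ioc (0:ℝ) t, ENNReal.ofReal (s ^ P)) < ⊤ ↔ -1 < P := by
  rw [← MeasureTheory.restrict_Ioo_eq_restrict_Ioc]
  have hnn : 0 ≤ᵐ[volume.restrict (Set.Ioo (0:ℝ) t)] fun s : ℝ => s ^ P :=
    (ae_restrict_iff' measurableSet_Ioo).2 (Filter.Eventually.of_forall
      fun s hs => Real.rpow_nonneg hs.1.le _)
  rw [← hasFiniteIntegral_iff_ofReal hnn]
  constructor
  · intro h
    exact (intervalIntegral.integrableOn_Ioo_rpow_iff ht).1
      ⟨(measurable_id.pow_const P).aestronglyMeasurable, h⟩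
  · intro h
    exact ((intervalIntegral.integrableOn_Ioo_rpow_iff ht).2 h).2

/-- for the mild solution of the fractional stochastic heat equation on `ℝ`
driven by Riesz-kernel noise (with `θ = σ = 1`), whose second moment of the `m`-th spatial
derivative has the spectral representation
`V(t,x) = (2π)⁻¹ ∫_0^t ∫_ℝ |ξ|^{2m−4γ} e^{−2s|ξ|^α} dξ ds`, one has
`V(t,x) = c ∫_0^t s^{(4γ−2m−1)/α} ds · ∫_ℝ e^{−2|ξ|^α}|ξ|^{2m−4γ} dξ`, and
`sup_{t∈[0,T], x∈ℝ} V(t,x) < ∞` for every `T > 0` if and only if `1 + 2m < α + 4γ`. -/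
theorem fractional_heat_derivative_second_moment
    (α γ : ℝ) (hα : 0 < α) (hγ : γ ∈ Set.Ioo (0:ℝ) (1/4)) (m : ℕ)
    (V : ℝ → ℝ → ℝ≥0∞)
    (hV : ∀ t x : ℝ, V t x
      = ENNReal.ofReal (2 * π)⁻¹ *
          ∫⁻ s in Set.Ioc (0:ℝ) t,
            ∫⁻ ξ : ℝ, ENNReal.ofReal
              (|ξ| ^ (2 * (m : ℝ) - 4 * γ) * Real.exp (-2 * s * |ξ| ^ α))) :
    (∃ c : ℝ, 0 < c ∧ ∀ t x : ℝ, 0 ≤ t →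
      V t x = ENNReal.ofReal c *
        (∫⁻ s in Set.Ioc (0:ℝ) t,
           ENNReal.ofReal (s ^ ((4 * γ - 2 * (m : ℝ) - 1) / α))) *
        ∫⁻ ξ : ℝ, ENNReal.ofReal
          (Real.exp (-2 * |ξ| ^ α) * |ξ| ^ (2 * (m : ℝ) - 4 * γ))) ∧
    ((∀ T : ℝ, 0 < T → (⨆ t ∈ Set.Icc (0:ℝ) T, ⨆ _x : ℝ, V t _x) < ⊤) ↔
      1 + 2 * (m : ℝ) < α + 4 * γ) := by
  obtain ⟨hγ0, hγ4⟩ := hγ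
  have hq1 : -1 < 2 * (m : ℝ) - 4 * γ := by
    have h0 : (0:ℝ) ≤ 2 * m := by positivity
    linarith
  have hPq : -(2 * (m : ℝ) - 4 * γ + 1) / α = (4 * γ - 2 * (m : ℝ) - 1) / α := by ring
  set I := ∫⁻ ξ : ℝ, ENNReal.ofReal
      (Real.exp (-2 * |ξ| ^ α) * |ξ| ^ (2 * (m : ℝ) - 4 * γ)) with hI
  have hIfin : I < ⊤ := (fhd_integrable hα hq1).lintegral_lt_top
  have hIpos : 0 < I := by
    rw [hI, lintegral_pos_iff_support (fhd_meas2 (-2) α (2 * (m : ℝ) - 4 * γ))]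
    refine lt_of_lt_of_le ?_ (measure_mono (?_ : Set.Ioo (1:ℝ) 2 ⊆ _))
    · rw [Real.volume_Ioo]; norm_num
    · intro ξ hξ
      have h0 : (0:ℝ) < ξ := lt_trans one_pos hξ.1
      have hpos : 0 < Real.exp (-2 * |ξ| ^ α) * |ξ| ^ (2 * (m : ℝ) - 4 * γ) :=
        mul_pos (Real.exp_pos _) (Real.rpow_pos_of_pos (abs_pos.2 h0.ne') _)
      simp only [Function.mem_support, ne_eq, ENNReal.ofReal_eq_zero, not_le]
      exact hpos
  have hVc : ∀ t x : ℝ, V t x = ENNReal.ofReal (2 * π)⁻¹ *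
      (∫⁻ s in Set.Ioc (0:ℝ) t,
        ENNReal.ofReal (s ^ ((4 * γ - 2 * (m : ℝ) - 1) / α))) * I := by
    intro t x
    rw [hV t x]
    have h1 : (∫⁻ s in Set.Ioc (0:ℝ) t,
          ∫⁻ ξ : ℝ, ENNReal.ofReal
            (|ξ| ^ (2 * (m : ℝ) - 4 * γ) * Real.exp (-2 * s * |ξ| ^ α)))
        = ∫⁻ s in Set.Ioc (0:ℝ) t,
            ENNReal.ofReal (s ^ ((4 * γ - 2 * (m : ℝ) - 1) / α)) * I := by
      refine setLIntegral_congr_fun measurableSet_Ioc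
        (fun s hs => ?_)
      rw [fhd_scale hα hs.1, hPq, hI]
    rw [h1, lintegral_mul_const _ (fhd_measP _)]
    exact (mul_assoc _ _ _).symm
  have hsup : ∀ T : ℝ, 0 ≤ T →
      (⨆ t ∈ Set.Icc (0:ℝ) T, ⨆ _x : ℝ, V t _x)
        = ENNReal.ofReal (2 * π)⁻¹ * (∫⁻ s in Set.Ioc (0:ℝ) T,
            ENNReal.ofReal (s ^ ((4 * γ - 2 * (m : ℝ) - 1) / α))) * I := by
    intro T hT
    apply le_antisymm
    · refine iSup₂_le fun t ht => iSup_le fun x => ?_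
      rw [hVc t x]
      gcongr
      exact ht.2
    · calc ENNReal.ofReal (2 * π)⁻¹ * (∫⁻ s in Set.Ioc (0:ℝ) T,
            ENNReal.ofReal (s ^ ((4 * γ - 2 * (m : ℝ) - 1) / α))) * I
          = V T 0 := (hVc T 0).symm
        _ ≤ ⨆ _x : ℝ, V T _x := le_iSup (fun x => V T x) 0
        _ ≤ _ := le_iSup₂ (f := fun t (_ : t ∈ Set.Icc (0:ℝ) T) => ⨆ _x : ℝ, V t _x)
              T ⟨hT, le_rfl⟩
  refine ⟨⟨(2 * π)⁻¹, by positivity, fun t x _ => hVc t x⟩, ?_⟩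
  constructor
  · intro h
    have h1 := h 1 one_pos
    rw [hsup 1 zero_le_one] at h1
    have hAne : (∫⁻ s in Set.Ioc (0:ℝ) 1,
        ENNReal.ofReal (s ^ ((4 * γ - 2 * (m : ℝ) - 1) / α))) ≠ ⊤ := by
      intro hA
      rw [hA, ENNReal.mul_top (by simp only [ne_eq, ENNReal.ofReal_eq_zero, not_le]; positivity),
        ENNReal.top_mul hIpos.ne'] at h1
      exact lt_irrefl ⊤ h1
    have hP := (fhd_afin one_pos).1 hAne.lt_top
    rw [lt_div_iff₀ hα] at hP
    linarith
  · intro h T hT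
    rw [hsup T hT.le]
    have hP : -1 < (4 * γ - 2 * (m : ℝ) - 1) / α := by
      rw [lt_div_iff₀ hα]; linarith
    exact ENNReal.mul_lt_top (ENNReal.mul_lt_top ENNReal.ofReal_lt_top ((fhd_afin hT).2 hP)) hIfin
end
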